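/- Let G be a finite simple graph and a, b two nonadjacent vertices of G with S_{a,b} ≠ ∅. Every edge e' of G with φ_G(e') > k_max((a,b)) is unaffected by inserting the edge (a,b): φ_{G+(a,b)}(e') = φ_G(e'). -/

import Mathlib

open SimpleGraph

variable {V : Type*}

/-- `H` is a `k`-truss of `G`: a connected subgraph with at least one edge in which
every edge lies in at least `k - 2` triangles of `H` (i.e. the endpoints of every edge
have at least `k - 2` common neighbors in `H`). -/
def IsTruss (G : SimpleGraph V) (k : ℕ) (H : G.Subgraph) : Prop :=
  H.Connected ∧ H.edgeSet.Nonempty ∧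
    ∀ a b : V, H.Adj a b → k - 2 ≤ {c : V | H.Adj a c ∧ H.Adj b c}.ncard

/-- The truss number `φ_G(e)` of an edge `e`: the largest `k` such that `e` lies in some
`k`-truss of `G`. -/
noncomputable def trussNumber (G : SimpleGraph V) (e : Sym2 V) : ℕ :=
  sSup {k : ℕ | ∃ H : G.Subgraph, IsTruss G k H ∧ e ∈ H.edgeSet}

/-- The support of the edge `(a, b)` in a subgraph `H`: the number of triangles of `H`
containing it, i.e. the number of common neighbors of `a` and `b` in `H`. -/
noncomputable def suppIn {G : SimpleGraph V} (H : G.Subgraph) (a b : V) : ℕ :=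
  {c : V | H.Adj a c ∧ H.Adj b c}.ncard

/-- The support of the edge `(a, b)` in `G`. -/
noncomputable def suppG (G : SimpleGraph V) (a b : V) : ℕ :=
  {c : V | G.Adj a c ∧ G.Adj b c}.ncard

/-- `S_{a,b}`: the common neighbors of `a` and `b` in `G`. -/
def commonNbrs (G : SimpleGraph V) (a b : V) : Set V :=
  {c : V | G.Adj a c ∧ G.Adj b c}

/-- `E_{S_{a,b} ↔ {a,b}}`: the edges of `G` joining a common neighbor of `a` and `b`
to `a` or to `b`. -/
def sideEdges (G : SimpleGraph V) (a b : V) : Set (Sym2 V) :=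
  {e | ∃ c, G.Adj a c ∧ G.Adj b c ∧ (e = s(a, c) ∨ e = s(b, c))}

/-- `k_min((a,b))`: minimum truss number among the edges of `E_{S_{a,b} ↔ {a,b}}`. -/
noncomputable def kmin (G : SimpleGraph V) (a b : V) : ℕ :=
  sInf (trussNumber G '' sideEdges G a b)

/-- `k_max((a,b))`: maximum truss number among the edges of `E_{S_{a,b} ↔ {a,b}}`. -/
noncomputable def kmax (G : SimpleGraph V) (a b : V) : ℕ :=
  sSup (trussNumber G '' sideEdges G a b)

/-- `G + (a,b)`: the graph obtained from `G` by inserting the edge `(a, b)`. -/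
def insertEdge (G : SimpleGraph V) (a b : V) : SimpleGraph V :=
  G ⊔ fromEdgeSet {s(a, b)}

/-!
Inserting `(a, b)` can only raise the truss number of `e'` through a truss that uses the new
edge. In a `k`-truss of `G + (a,b)` with `k ≥ 3` the edge `(a, b)` lies in a triangle `a c b`;
deleting `(a, b)` costs every other edge at most one triangle and keeps the subgraph connected
through `c`, so it leaves a `(k - 1)`-truss of `G` containing `(a, c) ∈ E_{S_{a,b} ↔ {a,b}}`.
Hence `k - 1 ≤ k_max((a,b))`, and an edge whose truss number exceeds `k_max((a,b))` does not gain.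
-/

namespace SimpleGraph

lemma Preconnected.of_adj_reachable {W : Type*} {G G' : SimpleGraph W} (hG : G.Preconnected)
    (h : ∀ ⦃u v⦄, G.Adj u v → G'.Reachable u v) : G'.Preconnected := by
  intro u v
  rw [reachable_eq_reflTransGen] at h ⊢
  exact Relation.reflTransGen_closed h u v ((reachable_iff_reflTransGen u v).1 (hG u v))

namespace Subgraph

variable {G G' : SimpleGraph V}

def transfer (H : G.Subgraph) (h : ∀ ⦃x y⦄, H.Adj x y → G'.Adj x y) : G'.Subgraph where
  verts := H.verts
  Adj := H.Adj
  adj_sub hxy := h hxy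
  edge_vert := H.edge_vert
  symm := H.symm

variable {H : G.Subgraph} {a b c : V}

lemma adj_deleteEdges_of_adj_adj (hac : H.Adj a c) (hbc : H.Adj b c) :
    (H.deleteEdges {s(a, b)}).Adj a c ∧ (H.deleteEdges {s(a, b)}).Adj b c := by
  simp only [deleteEdges_adj, Set.mem_singleton_iff]
  refine ⟨⟨hac, fun h => hbc.ne.symm (Sym2.congr_right.1 h)⟩,
    ⟨hbc, fun h => hac.ne.symm ?_⟩⟩
  rw [Sym2.eq_swap (a := a)] at h
  exact Sym2.congr_right.1 h

lemma Connected.deleteEdges_of_adj_adj (hH : H.Connected) (hac : H.Adj a c) (hbc : H.Adj b c) :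
    (H.deleteEdges {s(a, b)}).Connected := by
  obtain ⟨hac', hbc'⟩ := adj_deleteEdges_of_adj_adj hac hbc
  have hc : c ∈ H.verts := H.edge_vert hac.symm
  have reach_c : ∀ z : H.verts, z.1 ∈ s(a, b) →
      (H.deleteEdges {s(a, b)}).coe.Reachable z ⟨c, hc⟩ := by
    rintro ⟨z, hz⟩ hzab
    rcases Sym2.mem_iff.1 hzab with rfl | rfl
    exacts [Adj.reachable hac', Adj.reachable hbc']
  have : Nonempty (H.deleteEdges {s(a, b)}).verts := hH.coe.nonempty
  refine ⟨⟨hH.coe.preconnected.of_adj_reachable fun x y hxy => ?_⟩⟩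
  by_cases hxyab : s(x.1, y.1) = s(a, b)
  · exact (reach_c x (hxyab ▸ Sym2.mem_mk_left _ _)).trans
      (reach_c y (hxyab ▸ Sym2.mem_mk_right _ _)).symm
  · exact Adj.reachable ⟨hxy, hxyab⟩

end Subgraph

end SimpleGraph

variable {G G' : SimpleGraph V} {H : G.Subgraph} {k : ℕ} {a b c x y : V} {e : Sym2 V}

lemma suppIn_le_suppIn_deleteEdges_add_one [Finite V] (hxy : (H.deleteEdges {s(a, b)}).Adj x y) :
    suppIn H x y ≤ suppIn (H.deleteEdges {s(a, b)}) x y + 1 := by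
  set S := {z | H.Adj x z ∧ H.Adj y z}
  set S' := {z | (H.deleteEdges {s(a, b)}).Adj x z ∧ (H.deleteEdges {s(a, b)}).Adj y z}
  -- a lost triangle `x y z` has `s(x, z)` or `s(y, z)` equal to `s(a, b)`; two lost ones would
  -- force `s(x, y) = s(a, b)`
  have lost : (S \ S').ncard ≤ 1 := by
    refine (Set.ncard_le_one_iff).2 fun {z w} hz hw => ?_
    simp only [S, S', Set.mem_sdiff, Set.mem_ofPred_eq, Subgraph.deleteEdges_adj,
      Set.mem_singleton_iff, Sym2.eq_iff] at hz hw hxy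
    grind
  calc suppIn H x y ≤ (S \ S').ncard + S'.ncard := Set.ncard_le_ncard_sdiff_add_ncard S S'
    _ ≤ S'.ncard + 1 := by omega

lemma adj_of_insertEdge_adj (h : (insertEdge G a b).Adj x y) (hne : s(x, y) ≠ s(a, b)) :
    G.Adj x y :=
  h.resolve_right fun h' => hne h'.1

lemma IsTruss.transfer (hH : IsTruss G k H) (h : ∀ ⦃x y⦄, H.Adj x y → G'.Adj x y) :
    IsTruss G' k (H.transfer h) :=
  ⟨⟨hH.1.coe⟩, hH.2.1, hH.2.2⟩

lemma IsTruss.deleteEdges [Finite V] (hH : IsTruss G k H) (hac : H.Adj a c) (hbc : H.Adj b c) :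
    IsTruss G (k - 1) (H.deleteEdges {s(a, b)}) := by
  refine ⟨hH.1.deleteEdges_of_adj_adj hac hbc,
    ⟨s(a, c), (Subgraph.adj_deleteEdges_of_adj_adj hac hbc).1⟩, fun x y hxy => ?_⟩
  have hold := hH.2.2 x y hxy.1
  have hnew := suppIn_le_suppIn_deleteEdges_add_one hxy
  unfold suppIn at hnew
  omega

lemma IsTruss.exists_adj_adj [Finite V] (hH : IsTruss G k H) (hk : 3 ≤ k) (hab : H.Adj a b) :
    ∃ c, H.Adj a c ∧ H.Adj b c :=
  (Set.ncard_pos).1 (lt_of_lt_of_le (by omega) (hH.2.2 a b hab))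

lemma IsTruss.le_card_add_two [Finite V] (hH : IsTruss G k H) : k ≤ Nat.card V + 2 := by
  obtain ⟨e, he⟩ := hH.2.1
  induction e with | _ x y =>
  have := hH.2.2 x y he
  have := Set.ncard_le_card {c | H.Adj x c ∧ H.Adj y c}
  omega

lemma bddAbove_trussSet [Finite V] (G : SimpleGraph V) (e : Sym2 V) :
    BddAbove {k : ℕ | ∃ H : G.Subgraph, IsTruss G k H ∧ e ∈ H.edgeSet} :=
  ⟨Nat.card V + 2, fun _ ⟨_, hH, _⟩ => hH.le_card_add_two⟩

lemma IsTruss.le_trussNumber [Finite V] (hH : IsTruss G k H) (he : e ∈ H.edgeSet) :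
    k ≤ trussNumber G e :=
  le_csSup (bddAbove_trussSet G e) ⟨H, hH, he⟩

lemma isTruss_two_subgraphOfAdj (h : G.Adj x y) : IsTruss G 2 (G.subgraphOfAdj h) :=
  ⟨Subgraph.subgraphOfAdj_connected h, ⟨s(x, y), subgraphOfAdj_adj_self h⟩,
    fun _ _ _ => Nat.zero_le _⟩

lemma two_le_trussNumber [Finite V] (he : e ∈ G.edgeSet) : 2 ≤ trussNumber G e := by
  induction e with | _ x y =>
  exact (isTruss_two_subgraphOfAdj he).le_trussNumber (subgraphOfAdj_adj_self he)

lemma exists_isTruss_trussNumber [Finite V] (he : e ∈ G.edgeSet) :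
    ∃ H : G.Subgraph, IsTruss G (trussNumber G e) H ∧ e ∈ H.edgeSet := by
  induction e with | _ x y =>
  refine Nat.sSup_mem ?_ (bddAbove_trussSet G _)
  exact ⟨2, _, isTruss_two_subgraphOfAdj he, subgraphOfAdj_adj_self he⟩

lemma trussNumber_mono [Finite V] (hle : G ≤ G') (he : e ∈ G.edgeSet) :
    trussNumber G e ≤ trussNumber G' e := by
  obtain ⟨H, hH, heH⟩ := exists_isTruss_trussNumber he
  exact (hH.transfer fun _ _ hxy => hle (H.adj_sub hxy)).le_trussNumber heH

lemma trussNumber_le_kmax [Finite V] (he : e ∈ sideEdges G a b) :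
    trussNumber G e ≤ kmax G a b :=
  le_csSup ((Set.toFinite _).image _).bddAbove ⟨e, he, rfl⟩

lemma trussNumber_insertEdge_le [Finite V] (a b : V) (he : e ∈ G.edgeSet) :
    trussNumber (insertEdge G a b) e ≤ max (trussNumber G e) (kmax G a b + 1) := by
  obtain ⟨H, hH, heH⟩ :=
    exists_isTruss_trussNumber (G := insertEdge G a b) (edgeSet_mono le_sup_left he)
  set k := trussNumber (insertEdge G a b) e
  by_cases hab : H.Adj a b
  · rcases le_or_gt k 2 with hk | hk
    · exact le_max_of_le_left (hk.trans (two_le_trussNumber he))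
    obtain ⟨c, hac, hbc⟩ := hH.exists_adj_adj hk hab
    have hG : ∀ ⦃x y⦄, (H.deleteEdges {s(a, b)}).Adj x y → G.Adj x y :=
      fun _ _ hxy => adj_of_insertEdge_adj (H.adj_sub hxy.1) hxy.2
    obtain ⟨hac', hbc'⟩ := Subgraph.adj_deleteEdges_of_adj_adj hac hbc
    have hside : s(a, c) ∈ sideEdges G a b := ⟨c, hG hac', hG hbc', Or.inl rfl⟩
    have := ((hH.deleteEdges hac hbc).transfer hG).le_trussNumber (e := s(a, c)) hac'
    have := trussNumber_le_kmax hside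
    omega
  · have hG : ∀ ⦃x y⦄, H.Adj x y → G.Adj x y := fun x y hxy =>
      adj_of_insertEdge_adj (H.adj_sub hxy) fun h => hab ((congrArg (· ∈ H.edgeSet) h).mp hxy)
    exact le_max_of_le_left ((hH.transfer hG).le_trussNumber heH)

theorem stmt15_general [Fintype V] (G : SimpleGraph V) (a b : V)
    (e' : Sym2 V) (he' : e' ∈ G.edgeSet)
    (h : kmax G a b < trussNumber G e') :
    trussNumber (insertEdge G a b) e' = trussNumber G e' := by
  have := trussNumber_insertEdge_le a b he'
  exact le_antisymm (by omega) (trussNumber_mono le_sup_left he')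

theorem stmt15 [Fintype V] (G : SimpleGraph V) (a b : V) (hab : a ≠ b)
    (hnadj : ¬ G.Adj a b) (hS : (commonNbrs G a b).Nonempty)
    (e' : Sym2 V) (he' : e' ∈ G.edgeSet)
    (h : kmax G a b < trussNumber G e') :
    trussNumber (insertEdge G a b) e' = trussNumber G e' :=
  stmt15_general G a b e' he' h
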